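/- arXiv:2107.11998 — 7 statements merged into one kernel-verified Lean document; each statement's English description precedes it below -/
import Mathlib

section
/- The pmf P(K=k) = (1-θ)(1-θ/2)···(1-θ/(k-1))·(θ/k), k ≥ 1, 0 < θ ≤ 1, sums to 1, i.e., it defines a valid probability distribution on the positive integers. -/
/-!
Write `S n = ∏_{i<n} (1 - θ/(i+1))` for the probability that `K > n`. Then
`P(K = n+1) = S n - S (n+1)`, so the series telescopes to `S 0 - lim S n = 1`, and `S n → 0`
because `S n ≤ exp (-θ H_n)` and the harmonic numbers `H_n` diverge.
-/

open Filter Finset Topology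

theorem hasSum_sub_succ_of_antitone {f : ℕ → ℝ} (hf : Antitone f)
    (hlim : Tendsto f atTop (𝓝 0)) : HasSum (fun n ↦ f n - f (n + 1)) (f 0) := by
  refine (hasSum_iff_tendsto_nat_of_nonneg (fun n ↦ sub_nonneg.2 (hf n.le_succ)) _).2 ?_
  simp_rw [sum_range_sub']
  simpa using hlim.const_sub (f 0)

theorem prod_one_sub_le_exp_neg_sum {ι : Type*} (s : Finset ι) {x : ι → ℝ}
    (hx : ∀ i ∈ s, x i ≤ 1) : ∏ i ∈ s, (1 - x i) ≤ Real.exp (-∑ i ∈ s, x i) := by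
  rw [← sum_neg_distrib, Real.exp_sum]
  exact prod_le_prod (fun i hi ↦ sub_nonneg.2 (hx i hi)) fun i _ ↦ Real.one_sub_le_exp_neg _

theorem tendsto_prod_range_one_sub_zero {x : ℕ → ℝ} (hx : ∀ i, x i ≤ 1)
    (hsum : Tendsto (fun n ↦ ∑ i ∈ range n, x i) atTop atTop) :
    Tendsto (fun n ↦ ∏ i ∈ range n, (1 - x i)) atTop (𝓝 0) :=
  squeeze_zero (fun _ ↦ prod_nonneg fun i _ ↦ sub_nonneg.2 (hx i))
    (fun _ ↦ prod_one_sub_le_exp_neg_sum _ fun i _ ↦ hx i)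
    (Real.tendsto_exp_atBot.comp (tendsto_neg_atTop_atBot.comp hsum))

theorem antitone_prod_range_one_sub {x : ℕ → ℝ} (hx0 : ∀ i, 0 ≤ x i) (hx1 : ∀ i, x i ≤ 1) :
    Antitone fun n ↦ ∏ i ∈ range n, (1 - x i) :=
  antitone_nat_of_succ_le fun n ↦ by
    rw [prod_range_succ]
    exact mul_le_of_le_one_right (prod_nonneg fun i _ ↦ sub_nonneg.2 (hx1 i))
      (by linarith [hx0 n])

/-- The pmf `P(K = k) = (1-θ)(1-θ/2)⋯(1-θ/(k-1))·(θ/k)`, `k ≥ 1`, `0 < θ ≤ 1`, sums to 1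
(here `k` is re-indexed as `k+1`, `k : ℕ`). -/
theorem bgw_pmf_sums_to_one (θ : ℝ) (hθ0 : 0 < θ) (hθ1 : θ ≤ 1) :
    ∑' k : ℕ, (∏ i ∈ Finset.range k, (1 - θ / (i + 1))) * (θ / (k + 1)) = 1 := by
  set x : ℕ → ℝ := fun i ↦ θ / (i + 1)
  have hx0 (i : ℕ) : 0 ≤ x i := by positivity
  have hx1 (i : ℕ) : x i ≤ 1 :=
    div_le_one_of_le₀ (by linarith [i.cast_nonneg (α := ℝ)]) (by positivity)
  have hdiv : Tendsto (fun n ↦ ∑ i ∈ range n, x i) atTop atTop := by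
    simpa [x, mul_sum, div_eq_mul_one_div θ] using
      Real.tendsto_sum_range_one_div_nat_succ_atTop.const_mul_atTop hθ0
  have hsum := hasSum_sub_succ_of_antitone (antitone_prod_range_one_sub hx0 hx1)
    (tendsto_prod_range_one_sub_zero hx1 hdiv)
  simp only [prod_range_succ, prod_range_zero, mul_sub, mul_one, sub_sub_cancel] at hsum
  exact hsum.tsum_eq
end

section
/- The joint density of the BGW(a,b₁,b₂,θ) distribution is f(x,y) = θ a² b₁ b₂ x^{a-1} y^{a-1} e^{-Z}(1-e^{-Z})^{θ-2}(1-θe^{-Z}), where Z = b₁x^a + b₂y^a, obtained as the mixed second partial derivative ∂²F/∂x∂y of F(x,y) = {1-e^{-b₁x^a}}^θ + {1-e^{-b₂y^a}}^θ - {1-e^{-Z}}^θ. -/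
/-!
With `φ(z) = (1 - e^{-z})^θ` the cdf is `F(x, y) = φ(b₁xᵃ) + φ(b₂yᵃ) - φ(b₁xᵃ + b₂yᵃ)`, so only the
last term depends on both variables and `∂²F/∂x∂y = -φ''(Z) · a b₁ x^{a-1} · a b₂ y^{a-1}`.
The density formula is then the closed form
`φ''(z) = -θ e^{-z} (1 - e^{-z})^{θ-2} (1 - θ e^{-z})`, valid for `z > 0`, where `1 - e^{-z} > 0`.
-/

open Real

noncomputable def bgwCDF (a b₁ b₂ θ : ℝ) (x y : ℝ) : ℝ :=
  (1 - exp (-(b₁ * x ^ a))) ^ θ + (1 - exp (-(b₂ * y ^ a))) ^ θ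
    - (1 - exp (-(b₁ * x ^ a + b₂ * y ^ a))) ^ θ

lemma one_sub_exp_neg_pos {z : ℝ} (hz : 0 < z) : 0 < 1 - exp (-z) := by
  have : exp (-z) < 1 := exp_lt_one_iff.mpr (by linarith)
  linarith

lemma hasDerivAt_one_sub_exp_neg_rpow (θ : ℝ) {z : ℝ} (hz : 0 < z) :
    HasDerivAt (fun z => (1 - exp (-z)) ^ θ) (θ * (1 - exp (-z)) ^ (θ - 1) * exp (-z)) z := by
  have hexp : HasDerivAt (fun z => 1 - exp (-z)) (exp (-z)) z := by
    simpa using ((hasDerivAt_neg z).exp).const_sub 1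
  convert hexp.rpow_const (p := θ) (Or.inl (one_sub_exp_neg_pos hz).ne') using 1
  ring

lemma hasDerivAt_mul_one_sub_exp_neg_rpow_mul_exp_neg (θ : ℝ) {z : ℝ} (hz : 0 < z) :
    HasDerivAt (fun z => θ * (1 - exp (-z)) ^ (θ - 1) * exp (-z))
      (-(θ * exp (-z) * (1 - exp (-z)) ^ (θ - 2) * (1 - θ * exp (-z)))) z := by
  have hpow := (hasDerivAt_one_sub_exp_neg_rpow (θ - 1) hz).const_mul θ
  refine (hpow.mul (hasDerivAt_neg z).exp).congr_deriv ?_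
  have hsplit : (1 - exp (-z)) ^ (θ - 1) = (1 - exp (-z)) ^ (θ - 2) * (1 - exp (-z)) := by
    rw [← rpow_add_one (one_sub_exp_neg_pos hz).ne']
    ring_nf
  rw [hsplit, show θ - 1 - 1 = θ - 2 by ring]
  ring

lemma hasDerivAt_bgwCDF_fst (a θ : ℝ) {b₁ b₂ x y : ℝ} (hb₁ : 0 < b₁) (hb₂ : 0 ≤ b₂)
    (hx : 0 < x) (hy : 0 ≤ y) :
    HasDerivAt (fun x' => bgwCDF a b₁ b₂ θ x' y)
      ((θ * (1 - exp (-(b₁ * x ^ a))) ^ (θ - 1) * exp (-(b₁ * x ^ a))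
        - θ * (1 - exp (-(b₁ * x ^ a + b₂ * y ^ a))) ^ (θ - 1)
            * exp (-(b₁ * x ^ a + b₂ * y ^ a))) * (b₁ * (a * x ^ (a - 1)))) x := by
  have hx₁ : 0 < b₁ * x ^ a := mul_pos hb₁ (rpow_pos_of_pos hx a)
  have hy₂ : 0 ≤ b₂ * y ^ a := mul_nonneg hb₂ (rpow_nonneg hy a)
  have hb₁xa := (hasDerivAt_rpow_const (p := a) (Or.inl hx.ne')).const_mul b₁
  have hsingle := (hasDerivAt_one_sub_exp_neg_rpow θ hx₁).comp x hb₁xa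
  have hZ : 0 < b₁ * x ^ a + b₂ * y ^ a := by linarith
  have hjoint := (hasDerivAt_one_sub_exp_neg_rpow θ hZ).comp x (hb₁xa.add_const (b₂ * y ^ a))
  refine ((hsingle.add_const ((1 - exp (-(b₂ * y ^ a))) ^ θ)).sub hjoint).congr_deriv ?_
  ring

theorem bgw_density_general (a b₁ b₂ θ : ℝ) (hb₁ : 0 < b₁) (hb₂ : 0 < b₂)
    (x y : ℝ) (hx : 0 < x) (hy : 0 < y) :
    deriv (fun y' : ℝ => deriv (fun x' : ℝ => bgwCDF a b₁ b₂ θ x' y') x) y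
      = θ * a ^ 2 * b₁ * b₂ * x ^ (a - 1) * y ^ (a - 1)
          * exp (-(b₁ * x ^ a + b₂ * y ^ a))
          * (1 - exp (-(b₁ * x ^ a + b₂ * y ^ a))) ^ (θ - 2)
          * (1 - θ * exp (-(b₁ * x ^ a + b₂ * y ^ a))) := by
  set φ' : ℝ → ℝ := fun z => θ * (1 - exp (-z)) ^ (θ - 1) * exp (-z)
  set K := b₁ * (a * x ^ (a - 1))
  have hinner : (fun y' => deriv (fun x' => bgwCDF a b₁ b₂ θ x' y') x)
      =ᶠ[nhds y] fun y' => (φ' (b₁ * x ^ a) - φ' (b₁ * x ^ a + b₂ * y' ^ a)) * K := by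
    filter_upwards [Ioi_mem_nhds hy] with y' hy'
    exact (hasDerivAt_bgwCDF_fst a θ hb₁ hb₂.le hx (le_of_lt hy')).deriv
  have hZ : 0 < b₁ * x ^ a + b₂ * y ^ a := by
    have := mul_pos hb₁ (rpow_pos_of_pos hx a)
    have := mul_pos hb₂ (rpow_pos_of_pos hy a)
    linarith
  have hφ'Z := (hasDerivAt_mul_one_sub_exp_neg_rpow_mul_exp_neg θ hZ).comp y
    (((hasDerivAt_rpow_const (p := a) (Or.inl hy.ne')).const_mul b₂).const_add (b₁ * x ^ a))
  have houter : HasDerivAt (fun y' => (φ' (b₁ * x ^ a) - φ' (b₁ * x ^ a + b₂ * y' ^ a)) * K) _ y :=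
    (hφ'Z.const_sub (φ' (b₁ * x ^ a))).mul_const K
  rw [hinner.deriv_eq, houter.deriv]
  ring

/-- The joint density of the BGW distribution is the mixed second partial
derivative `∂²F/∂x∂y` of its cdf:
`f(x,y) = θ a² b₁ b₂ x^{a-1} y^{a-1} e^{-Z} (1-e^{-Z})^{θ-2} (1-θe^{-Z})`,
`Z = b₁x^a + b₂y^a`. -/
theorem bgw_density (a b₁ b₂ θ : ℝ) (ha : 0 < a) (hb₁ : 0 < b₁) (hb₂ : 0 < b₂)
    (hθ0 : 0 < θ) (hθ1 : θ ≤ 1) (x y : ℝ) (hx : 0 < x) (hy : 0 < y) :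
    deriv (fun y' : ℝ => deriv (fun x' : ℝ => bgwCDF a b₁ b₂ θ x' y') x) y
      = θ * a ^ 2 * b₁ * b₂ * x ^ (a - 1) * y ^ (a - 1)
          * exp (-(b₁ * x ^ a + b₂ * y ^ a))
          * (1 - exp (-(b₁ * x ^ a + b₂ * y ^ a))) ^ (θ - 2)
          * (1 - θ * exp (-(b₁ * x ^ a + b₂ * y ^ a))) :=
  bgw_density_general a b₁ b₂ θ hb₁ hb₂ x y hx hy
end

section
/- For the BGW distribution, the conditional survival function S(y|x) = e^{-b₂y^a}(1-e^{-(b₁x^a+b₂y^a)})^{θ-1}/(1-e^{-b₁x^a})^{θ-1} is nondecreasing in x for each fixed y > 0 when 0 < θ ≤ 1 (positive regression dependence). -/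
open Real Set

/-! Write `t = e^{-b₁x^a}` and `k = e^{-b₂y^a} ≤ 1`. Then `S(y|x) = k · ((1 - tk)/(1 - t))^{θ-1}`, and
`(1 - tk)/(1 - t) = k + (1 - k)/(1 - t)` increases with `t`. As `x` grows, `t` decreases, so the ratio
decreases, and raising it to the nonpositive power `θ - 1` makes `S(y|x)` increase. -/

theorem monotoneOn_one_sub_mul_div_one_sub {k : ℝ} (hk : k ≤ 1) :
    MonotoneOn (fun t : ℝ => (1 - t * k) / (1 - t)) (Iio 1) := by
  intro s hs t ht hst
  rw [mem_Iio] at hs ht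
  rw [div_le_div_iff₀ (sub_pos.2 hs) (sub_pos.2 ht)]
  nlinarith [mul_nonneg (sub_nonneg.2 hst) (sub_nonneg.2 hk)]

theorem one_sub_exp_neg_pos_s8 {u : ℝ} (hu : 0 < u) : 0 < 1 - exp (-u) :=
  sub_pos.2 (exp_lt_one_iff.2 (neg_neg_of_pos hu))

theorem antitoneOn_one_sub_exp_neg_add_div {c : ℝ} (hc : 0 ≤ c) :
    AntitoneOn (fun u : ℝ => (1 - exp (-(u + c))) / (1 - exp (-u))) (Ioi 0) := by
  intro u hu v hv huv
  have hmono := monotoneOn_one_sub_mul_div_one_sub (exp_le_one_iff.2 (neg_nonpos.2 hc))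
  have hexp_mem {w : ℝ} (hw : w ∈ Ioi (0 : ℝ)) : exp (-w) ∈ Iio 1 :=
    exp_lt_one_iff.2 (neg_neg_of_pos hw)
  simpa only [neg_add, exp_add] using
    hmono (hexp_mem hv) (hexp_mem hu) (exp_le_exp.2 (neg_le_neg huv))

theorem monotoneOn_one_sub_exp_neg_add_div_rpow {c θ : ℝ} (hc : 0 ≤ c) (hθ : θ ≤ 1) :
    MonotoneOn (fun u : ℝ => ((1 - exp (-(u + c))) / (1 - exp (-u))) ^ (θ - 1)) (Ioi 0) := by
  intro u hu v hv huv
  have hratio_pos : 0 < (1 - exp (-(v + c))) / (1 - exp (-v)) :=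
    div_pos (one_sub_exp_neg_pos_s8 (add_pos_of_pos_of_nonneg hv hc)) (one_sub_exp_neg_pos_s8 hv)
  exact rpow_le_rpow_of_nonpos hratio_pos
    (antitoneOn_one_sub_exp_neg_add_div hc hu hv huv) (by linarith)

theorem bgw_positive_regression_dependent_general (a b₁ b₂ θ : ℝ)
    (ha : 0 < a) (hb₁ : 0 < b₁) (hb₂ : 0 < b₂) (hθ1 : θ ≤ 1)
    (y : ℝ) (hy : 0 < y) :
    ∀ x₁ x₂ : ℝ, 0 < x₁ → x₁ ≤ x₂ →
      exp (-(b₂ * y ^ a)) * (1 - exp (-(b₁ * x₁ ^ a + b₂ * y ^ a))) ^ (θ - 1)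
          / (1 - exp (-(b₁ * x₁ ^ a))) ^ (θ - 1)
        ≤ exp (-(b₂ * y ^ a)) * (1 - exp (-(b₁ * x₂ ^ a + b₂ * y ^ a))) ^ (θ - 1)
            / (1 - exp (-(b₁ * x₂ ^ a))) ^ (θ - 1) := by
  intro x₁ x₂ hx₁ hle
  have hc : 0 < b₂ * y ^ a := by positivity
  have hu_pos {x : ℝ} (hx : 0 < x) : 0 < b₁ * x ^ a := by positivity
  have hu₁ := hu_pos hx₁
  have hu₂ := hu_pos (hx₁.trans_le hle)
  have hratio := monotoneOn_one_sub_exp_neg_add_div_rpow hc.le hθ1 hu₁ hu₂ (by gcongr)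
  rw [mul_div_assoc, mul_div_assoc,
    ← div_rpow (one_sub_exp_neg_pos_s8 (add_pos hu₁ hc)).le (one_sub_exp_neg_pos_s8 hu₁).le,
    ← div_rpow (one_sub_exp_neg_pos_s8 (add_pos hu₂ hc)).le (one_sub_exp_neg_pos_s8 hu₂).le]
  exact mul_le_mul_of_nonneg_left hratio (exp_pos _).le

/-- Positive regression dependence of BGW: the conditional survival function
`S(y|x) = e^{-b₂y^a}(1-e^{-(b₁x^a+b₂y^a)})^{θ-1}/(1-e^{-b₁x^a})^{θ-1}`
is nondecreasing in `x` on `(0,∞)` for each fixed `y > 0`, when `0 < θ ≤ 1`. -/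
theorem bgw_positive_regression_dependent (a b₁ b₂ θ : ℝ)
    (ha : 0 < a) (hb₁ : 0 < b₁) (hb₂ : 0 < b₂) (hθ0 : 0 < θ) (hθ1 : θ ≤ 1)
    (y : ℝ) (hy : 0 < y) :
    ∀ x₁ x₂ : ℝ, 0 < x₁ → x₁ ≤ x₂ →
      exp (-(b₂ * y ^ a)) * (1 - exp (-(b₁ * x₁ ^ a + b₂ * y ^ a))) ^ (θ - 1)
          / (1 - exp (-(b₁ * x₁ ^ a))) ^ (θ - 1)
        ≤ exp (-(b₂ * y ^ a)) * (1 - exp (-(b₁ * x₂ ^ a + b₂ * y ^ a))) ^ (θ - 1)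
            / (1 - exp (-(b₁ * x₂ ^ a))) ^ (θ - 1) :=
  bgw_positive_regression_dependent_general a b₁ b₂ θ ha hb₁ hb₂ hθ1 y hy
end

section
/- The BGW distribution is positively quadrant dependent: for all x, y ≥ 0, S(x,y) ≥ S_X(x)·S_Y(y), i.e., 1-(1-e^{-(u+v)})^θ ≥ (1-(1-e^{-u})^θ)(1-(1-e^{-v})^θ) for all u, v ≥ 0 and 0 < θ ≤ 1. -/
open Real

/-! With `p = e^{-u}` and `q = e^{-v}` the inequality reads `g p * g q ≤ g (p * q)` for
`g p = 1 - (1 - p)^θ`. Splitting `1 - p q = (1-p)(1-q) + (1-p) q + p (1-q)`, this is the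
submodularity `f (x + h + d) + f x ≤ f (x + h) + f (x + d)` of the concave function `f t = t^θ`
at `x = (1-p)(1-q)`, combined with `f x = (1-p)^θ (1-q)^θ`. -/

theorem ConcaveOn.map_add_add_add_map_le {𝕜 : Type*} [Field 𝕜] [LinearOrder 𝕜]
    [IsStrictOrderedRing 𝕜] {s : Set 𝕜} {f : 𝕜 → 𝕜} (hf : ConcaveOn 𝕜 s f) {x h d : 𝕜} (hx : x ∈ s)
    (hxhd : x + h + d ∈ s) (hh : 0 ≤ h) (hd : 0 ≤ d) :
    f (x + h + d) + f x ≤ f (x + h) + f (x + d) := by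
  rcases (add_nonneg hh hd).eq_or_lt with hhd | hhd
  · obtain ⟨rfl, rfl⟩ : h = 0 ∧ d = 0 := ⟨by linarith, by linarith⟩
    simp
  set t := h / (h + d)
  have ht0 : 0 ≤ t := div_nonneg hh hhd.le
  have ht1 : 0 ≤ 1 - t := by
    rw [sub_nonneg, div_le_one hhd]
    linarith
  -- `x + h` and `x + d` are the convex combinations of `x` and `x + h + d` with swapped weights.
  have hxh : (1 - t) • x + t • (x + h + d) = x + h := by
    simp only [smul_eq_mul, t]
    field_simp
    ring
  have hxd : t • x + (1 - t) • (x + h + d) = x + d := by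
    simp only [smul_eq_mul, t]
    field_simp
    ring
  have h₁ := hf.2 hx hxhd ht1 ht0 (sub_add_cancel 1 t)
  have h₂ := hf.2 hx hxhd ht0 ht1 (add_sub_cancel t 1)
  rw [hxh] at h₁
  rw [hxd] at h₂
  simp only [smul_eq_mul] at h₁ h₂
  linarith

theorem Real.one_sub_one_sub_rpow_mul_le {θ p q : ℝ} (hθ0 : 0 ≤ θ) (hθ1 : θ ≤ 1)
    (hp0 : 0 ≤ p) (hp1 : p ≤ 1) (hq0 : 0 ≤ q) (hq1 : q ≤ 1) :
    (1 - (1 - p) ^ θ) * (1 - (1 - q) ^ θ) ≤ 1 - (1 - p * q) ^ θ := by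
  have key : (1 - p * q) ^ θ + (1 - p) ^ θ * (1 - q) ^ θ ≤ (1 - p) ^ θ + (1 - q) ^ θ := by
    have := (concaveOn_rpow hθ0 hθ1).map_add_add_add_map_le
      (x := (1 - p) * (1 - q)) (h := (1 - p) * q) (d := p * (1 - q))
      (Set.mem_Ici.2 (by nlinarith)) (Set.mem_Ici.2 (by nlinarith)) (by nlinarith) (by nlinarith)
    rwa [show (1 - p) * (1 - q) + (1 - p) * q + p * (1 - q) = 1 - p * q by ring,
      show (1 - p) * (1 - q) + (1 - p) * q = 1 - p by ring,
      show (1 - p) * (1 - q) + p * (1 - q) = 1 - q by ring,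
      mul_rpow (by linarith) (by linarith)] at this
  linear_combination key

/-- Positive quadrant dependence of the BGW distribution: with `u = b₁x^a`, `v = b₂y^a`,
`1-(1-e^{-(u+v)})^θ ≥ (1-(1-e^{-u})^θ)(1-(1-e^{-v})^θ)` for all `u, v ≥ 0`, `0 < θ ≤ 1`. -/
theorem bgw_pqd (θ : ℝ) (hθ0 : 0 < θ) (hθ1 : θ ≤ 1) (u v : ℝ) (hu : 0 ≤ u) (hv : 0 ≤ v) :
    (1 - (1 - exp (-u)) ^ θ) * (1 - (1 - exp (-v)) ^ θ)
      ≤ 1 - (1 - exp (-(u + v))) ^ θ := by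
  rw [neg_add, exp_add]
  exact one_sub_one_sub_rpow_mul_le hθ0.le hθ1 (exp_nonneg _) (exp_le_one_iff.2 (by linarith))
    (exp_nonneg _) (exp_le_one_iff.2 (by linarith))
end

section
/- The r-th moment of X ~ EW(a,b,θ) (exponentiated Weibull, cdf (1-e^{-bx^a})^θ) is E[X^r] = (θ Γ(1+r/a)/b^{r/a}) ∑_{j=0}^∞ binom(θ-1,j) (-1)^j/(j+1)^{1+r/a}. -/
/-!
For `θ ≤ 1` the binomial series `(1 - t) ^ (θ - 1) = ∑ (-1) ^ j * binom(θ - 1, j) * t ^ j` has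
coefficients in `[0, 1]`. Putting `t = exp (-b x ^ a)` writes the exponentiated Weibull density as
the nonnegative mixture `∑ θ (-1) ^ j binom(θ - 1, j) / (j + 1) • w(a, (j + 1) b)` of Weibull
densities, so the moment may be integrated termwise, and the `r`-th moment of `w(a, c)` is
`Γ(1 + r / a) / c ^ (r / a)`.
-/

open Real MeasureTheory Finset
open scoped Nat

lemma Ring.choose_eq_prod_range_div_factorial {K : Type*} [Field K] [CharZero K] (a : K) (n : ℕ) :
    Ring.choose a n = (∏ i ∈ range n, (a - i)) / n ! := by
  rw [Ring.choose_eq_smul, ← Polynomial.aeval_eq_smeval, ← Polynomial.eval_map_algebraMap,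
    descPochhammer_map, descPochhammer_eval_eq_prod_range, smul_eq_mul, inv_mul_eq_div]

lemma neg_one_pow_mul_choose_eq_prod_range {K : Type*} [Field K] [CharZero K] (a : K) (n : ℕ) :
    (-1) ^ n * Ring.choose a n = ∏ i ∈ range n, (i - a) / (i + 1) := by
  have hneg : ∏ i ∈ range n, ((i : K) - a) = (-1) ^ n * ∏ i ∈ range n, (a - i) := by
    simpa only [neg_sub, card_range] using prod_neg (s := range n) fun i ↦ a - i
  rw [Ring.choose_eq_prod_range_div_factorial, prod_div_distrib, hneg, mul_div_assoc,
    ← prod_range_add_one_eq_factorial, Nat.cast_prod]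
  push_cast
  rfl

lemma neg_one_pow_mul_choose_nonneg {a : ℝ} (ha : a ≤ 0) (n : ℕ) :
    0 ≤ (-1) ^ n * Ring.choose a n := by
  rw [neg_one_pow_mul_choose_eq_prod_range]
  exact prod_nonneg fun i _ ↦ div_nonneg (by linarith [i.cast_nonneg (α := ℝ)]) (by positivity)

lemma neg_one_pow_mul_choose_le_one {a : ℝ} (ha₁ : -1 ≤ a) (ha₀ : a ≤ 0) (n : ℕ) :
    (-1) ^ n * Ring.choose a n ≤ 1 := by
  rw [neg_one_pow_mul_choose_eq_prod_range]
  refine prod_le_one (fun i _ ↦ div_nonneg (by linarith [i.cast_nonneg (α := ℝ)]) (by positivity))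
    fun i _ ↦ (div_le_one (by positivity)).mpr (by linarith)

lemma summable_neg_one_pow_mul_choose_div_rpow {a p : ℝ} (ha₁ : -1 ≤ a) (ha₀ : a ≤ 0)
    (hp : 1 < p) : Summable fun n : ℕ ↦ (-1) ^ n * Ring.choose a n / ((n : ℝ) + 1) ^ p := by
  have hsum : Summable fun n : ℕ ↦ 1 / ((n : ℝ) + 1) ^ p := by
    simpa using (summable_nat_add_iff 1).mpr (summable_one_div_nat_rpow.mpr hp)
  refine hsum.of_nonneg_of_le (fun n ↦ div_nonneg (neg_one_pow_mul_choose_nonneg ha₀ n)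
    (by positivity)) fun n ↦ div_le_div_of_nonneg_right (neg_one_pow_mul_choose_le_one ha₁ ha₀ n)
    (by positivity)

lemma Real.hasSum_one_sub_rpow (a : ℝ) {t : ℝ} (ht : |t| < 1) :
    HasSum (fun n ↦ (-1) ^ n * Ring.choose a n * t ^ n) ((1 - t) ^ a) := by
  have h := one_add_rpow_hasFPowerSeriesOnBall_zero (a := a) |>.hasSum (y := -t) (by
    simpa [enorm_eq_nnnorm, ← NNReal.coe_lt_coe] using ht)
  rw [binomialSeries, FormalMultilinearSeries.ofScalars_apply_eq', zero_add, ← sub_eq_add_neg] at h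
  have e : (fun n ↦ Ring.choose a n • (-t) ^ n) = fun n ↦ (-1) ^ n * Ring.choose a n * t ^ n := by
    funext n
    rw [neg_pow, smul_eq_mul]
    ring
  rwa [e] at h

/-- Density of the Weibull law with distribution function `1 - exp (-b x ^ a)` on `x > 0`. -/
noncomputable def weibullDensity (a b x : ℝ) : ℝ := a * b * x ^ (a - 1) * exp (-(b * x ^ a))

section Weibull

variable {a b x : ℝ}

lemma weibullDensity_nonneg (ha : 0 ≤ a) (hb : 0 ≤ b) (hx : 0 ≤ x) : 0 ≤ weibullDensity a b x := by
  unfold weibullDensity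
  positivity

lemma rpow_mul_weibullDensity (r : ℝ) (hx : 0 < x) :
    x ^ r * weibullDensity a b x = a * b * (x ^ (r + a - 1) * exp (-b * x ^ a)) := by
  rw [weibullDensity, add_sub_assoc, rpow_add hx, neg_mul]
  ring

lemma integrableOn_rpow_mul_weibullDensity (ha : 0 < a) (hb : 0 < b) {r : ℝ} (hr : -a < r) :
    IntegrableOn (fun x ↦ x ^ r * weibullDensity a b x) (Set.Ioi 0) := by
  refine IntegrableOn.congr_fun
    ((integrableOn_rpow_mul_exp_neg_mul_rpow (s := r + a - 1) (by linarith) ha hb).const_mul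
      (a * b)) (fun x hx ↦ (rpow_mul_weibullDensity r hx).symm) measurableSet_Ioi

lemma integral_rpow_mul_weibullDensity (ha : 0 < a) (hb : 0 < b) {r : ℝ} (hr : -a < r) :
    ∫ x in Set.Ioi 0, x ^ r * weibullDensity a b x = Gamma (1 + r / a) / b ^ (r / a) := by
  rw [setIntegral_congr_fun measurableSet_Ioi fun x hx ↦ rpow_mul_weibullDensity r hx,
    integral_const_mul, integral_rpow_mul_exp_neg_mul_rpow ha (by linarith) hb,
    show (r + a - 1 + 1) / a = 1 + r / a by field_simp; ring,
    show -(r + a - 1 + 1) / a = -(r / a) - 1 by field_simp; ring,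
    rpow_sub hb, rpow_neg hb.le, rpow_one]
  field_simp

lemma weibullDensity_natCast_add_one_mul (a b x : ℝ) (j : ℕ) :
    weibullDensity a ((j + 1) * b) x = (j + 1) * weibullDensity a b x * exp (-(b * x ^ a)) ^ j := by
  have hexp : exp (-((j + 1) * b * x ^ a)) = exp (-(b * x ^ a)) * exp (j * -(b * x ^ a)) := by
    rw [← exp_add]
    ring_nf
  rw [weibullDensity, weibullDensity, ← exp_nat_mul, hexp]
  ring

end Weibull

lemma hasSum_integral_of_nonneg {α ι : Type*} [MeasurableSpace α] {μ : Measure α} [Countable ι]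
    {F : ι → α → ℝ} (hF_int : ∀ i, Integrable (F i) μ) (hF_nonneg : ∀ i, 0 ≤ᵐ[μ] F i)
    (hF_sum : Summable fun i ↦ ∫ x, F i x ∂μ) :
    HasSum (fun i ↦ ∫ x, F i x ∂μ) (∫ x, ∑' i, F i x ∂μ) :=
  hasSum_integral_of_summable_integral_norm hF_int <| hF_sum.congr fun i ↦
    integral_congr_ae <| (hF_nonneg i).mono fun _ hx ↦ (Real.norm_of_nonneg hx).symm

lemma hasSum_weibullDensity_mul_one_sub_exp_rpow (a θ : ℝ) {b x : ℝ} (hb : 0 < b) (hx : 0 < x) :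
    HasSum (fun j : ℕ ↦ (-1) ^ j * Ring.choose θ j / (j + 1) * weibullDensity a ((j + 1) * b) x)
      (weibullDensity a b x * (1 - exp (-(b * x ^ a))) ^ θ) := by
  have ht : |exp (-(b * x ^ a))| < 1 := by
    rw [abs_of_pos (exp_pos _), exp_lt_one_iff, neg_lt_zero]
    positivity
  refine ((hasSum_one_sub_rpow θ ht).mul_left (weibullDensity a b x)).congr_fun fun j ↦ ?_
  rw [weibullDensity_natCast_add_one_mul]
  field_simp

/-- The `r`-th moment of `X ~ EW(a,b,θ)` (density `θab x^{a-1}e^{-bx^a}(1-e^{-bx^a})^{θ-1}`):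
`E[X^r] = (θΓ(1+r/a)/b^{r/a}) ∑_{j≥0} binom(θ-1,j)(-1)^j/(j+1)^{1+r/a}`. -/
theorem ew_moment (a b θ : ℝ) (ha : 0 < a) (hb : 0 < b) (hθ0 : 0 < θ) (hθ1 : θ ≤ 1)
    (r : ℝ) (hr : 0 < r) :
    ∫ x in Set.Ioi (0:ℝ),
        x ^ r * (θ * a * b * x ^ (a - 1) * exp (-(b * x ^ a))
          * (1 - exp (-(b * x ^ a))) ^ (θ - 1))
      = θ * Real.Gamma (1 + r / a) / b ^ (r / a)
          * ∑' j : ℕ, (∏ i ∈ Finset.range j, (θ - 1 - i)) / (Nat.factorial j)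
              * (-1:ℝ) ^ j / ((j : ℝ) + 1) ^ (1 + r / a) := by
  set c : ℕ → ℝ := fun j ↦ (-1) ^ j * Ring.choose (θ - 1) j
  set F : ℕ → ℝ → ℝ := fun j x ↦ θ * c j / (j + 1) * (x ^ r * weibullDensity a ((j + 1) * b) x)
  have hr' : -a < r := by linarith
  have hbj (j : ℕ) : 0 < (j + 1 : ℝ) * b := by positivity
  have hF_integral (j : ℕ) : ∫ x in Set.Ioi 0, F j x
      = θ * Gamma (1 + r / a) / b ^ (r / a) * (c j / ((j : ℝ) + 1) ^ (1 + r / a)) := by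
    rw [integral_const_mul, integral_rpow_mul_weibullDensity ha (hbj j) hr',
      mul_rpow (by positivity) hb.le, rpow_add (by positivity), rpow_one]
    field_simp
  have hF_nonneg (j : ℕ) : ∀ x ∈ Set.Ioi (0 : ℝ), 0 ≤ F j x := fun x hx ↦
    mul_nonneg (div_nonneg (mul_nonneg hθ0.le (neg_one_pow_mul_choose_nonneg (by linarith) j))
      (by positivity)) (mul_nonneg (rpow_nonneg (le_of_lt hx) r)
        (weibullDensity_nonneg ha.le (hbj j).le (le_of_lt hx)))
  have hsum := hasSum_integral_of_nonneg
    (fun j ↦ (integrableOn_rpow_mul_weibullDensity ha (hbj j) hr').const_mul _)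
    (fun j ↦ ae_restrict_of_forall_mem measurableSet_Ioi (hF_nonneg j))
    (((summable_neg_one_pow_mul_choose_div_rpow (by linarith) (by linarith)
      (by linarith [div_pos hr ha])).mul_left _).congr fun j ↦ (hF_integral j).symm)
  have hpt : ∀ x ∈ Set.Ioi (0 : ℝ), x ^ r * (θ * a * b * x ^ (a - 1) * exp (-(b * x ^ a))
      * (1 - exp (-(b * x ^ a))) ^ (θ - 1)) = ∑' j, F j x := fun x hx ↦ by
    rw [(((hasSum_weibullDensity_mul_one_sub_exp_rpow a (θ - 1) hb hx).mul_left
      (θ * x ^ r)).congr_fun fun j ↦ by ring).tsum_eq, weibullDensity]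
    ring
  rw [setIntegral_congr_fun measurableSet_Ioi hpt, ← hsum.tsum_eq, tsum_congr hF_integral,
    tsum_mul_left]
  congr 1
  refine tsum_congr fun j ↦ ?_
  simp only [c, Ring.choose_eq_prod_range_div_factorial]
  ring
end

section
/- For 0 < θ ≤ 1 and Z > 0, the quantity (2-θ)/(1-e^{-Z})² - θ/(1-θe^{-Z})² is nonnegative; hence the local dependence function of the BGW density is nonnegative and the BGW density is totally positive of order 2 (TP2). -/
open Real

theorem div_one_sub_mul_sq_le_div_one_sub_sq {θ u : ℝ} (hθ0 : 0 ≤ θ) (hθ1 : θ ≤ 1)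
    (hu0 : 0 ≤ u) (hu1 : u < 1) :
    θ / (1 - θ * u) ^ 2 ≤ (2 - θ) / (1 - u) ^ 2 := by
  have hu : 0 < 1 - u := sub_pos.mpr hu1
  have hθu : 1 - u ≤ 1 - θ * u := sub_le_sub_left (mul_le_of_le_one_left hu0 hθ1) 1
  calc θ / (1 - θ * u) ^ 2 ≤ θ / (1 - u) ^ 2 :=
        div_le_div_of_nonneg_left hθ0 (by positivity) (pow_le_pow_left₀ hu.le hθu 2)
    _ ≤ (2 - θ) / (1 - u) ^ 2 := div_le_div_of_nonneg_right (by linarith) (by positivity)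

/-- For `0 < θ ≤ 1` and `Z > 0`, `(2-θ)/(1-e^{-Z})² - θ/(1-θe^{-Z})² ≥ 0`; hence, by the
Holland–Wang criterion, the local dependence function of the BGW density is nonnegative
and the BGW density is TP2. -/
theorem bgw_tp2 (θ : ℝ) (hθ0 : 0 < θ) (hθ1 : θ ≤ 1) (Z : ℝ) (hZ : 0 < Z) :
    0 ≤ (2 - θ) / (1 - exp (-Z)) ^ 2 - θ / (1 - θ * exp (-Z)) ^ 2 :=
  sub_nonneg.mpr <| div_one_sub_mul_sq_le_div_one_sub_sq hθ0.le hθ1 (exp_pos _).le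
    (exp_lt_one_iff.mpr (neg_lt_zero.mpr hZ))
end

section
/- For (X,Y) ~ BGW(a,b₁,b₂,θ), the regression function is E[Y | X = x] = (ab₁Γ(1+1/a)x^{a-1}/(b₂^{1/a} f_X(x))) · ∑_{j=1}^∞ binom(θ,j)(-1)^{j+1} j^{1-1/a} e^{-jb₁x^a}, where f_X is the marginal density of X; in particular, when a = 1 this reduces to E[Y|X=x] = (b₁/(b₂ f_X(x)))·[1-(1-e^{-b₁x})^θ]. -/
/-!
With `u = exp (-(b₁ x ^ a + b₂ y ^ a))` the density is a multiple of
`θ u (1 - u) ^ (θ - 2) (1 - θ u) = ∑ (-1) ^ (n + 1) binom(θ, n) n ^ 2 u ^ n`, which comes from the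
binomial series of `(1 - u) ^ θ` by applying the absorption identity
`n binom(r, n) = r binom(r - 1, n - 1)` twice. So `y f(x, y)` is a series of terms
`y ^ a exp (-(j + 1) b₂ y ^ a)`, each integrating to a Gamma value. Since `|binom(θ, n)| ≤ 1` for
`|θ| ≤ 1`, the absolute integrals are dominated by `∑ j ^ 2 exp (-j b₁ x ^ a)`, so summation and
integration commute. For `a = 1` the resulting series is the binomial series of
`(1 - exp (-b₁ x)) ^ θ` without its constant term.
-/

open Real

/-- The BGW joint density. -/
noncomputable def bgwPDF (a b₁ b₂ θ : ℝ) (x y : ℝ) : ℝ :=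
  θ * a ^ 2 * b₁ * b₂ * x ^ (a - 1) * y ^ (a - 1)
    * exp (-(b₁ * x ^ a + b₂ * y ^ a))
    * (1 - exp (-(b₁ * x ^ a + b₂ * y ^ a))) ^ (θ - 2)
    * (1 - θ * exp (-(b₁ * x ^ a + b₂ * y ^ a)))

/-- The marginal density of `X` under BGW. -/
noncomputable def bgwMarginalDensity (a b θ : ℝ) (x : ℝ) : ℝ :=
  θ * a * b * x ^ (a - 1) * exp (-(b * x ^ a)) * (1 - exp (-(b * x ^ a))) ^ (θ - 1)

open Finset MeasureTheory Set

namespace Ring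

theorem choose_eq_prod_range_div {K : Type*} [Field K] [CharZero K] (r : K) (n : ℕ) :
    choose r n = (∏ i ∈ range n, (r - i)) / n.factorial := by
  rw [choose_eq_smul, ← Polynomial.aeval_eq_smeval, Polynomial.aeval_def, ← Polynomial.eval_map,
    descPochhammer_map, descPochhammer_eval_eq_prod_range, smul_eq_mul, inv_mul_eq_div]

theorem succ_mul_choose_succ {R : Type*} [NonAssocRing R] [Pow R ℕ] [NatPowAssoc R]
    [BinomialRing R] (r : R) (n : ℕ) : (n + 1) * choose r (n + 1) = r * choose (r - 1) n := by
  have := choose_smul_choose r (Nat.le_add_left 1 n)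
  simpa [choose_one_right, nsmul_eq_mul] using this

theorem abs_choose_le_one {r : ℝ} (hr : |r| ≤ 1) (n : ℕ) : |choose r n| ≤ 1 := by
  rw [choose_eq_prod_range_div, abs_div, abs_prod, Nat.abs_cast,
    ← prod_range_add_one_eq_factorial, Nat.cast_prod, div_le_one (by positivity)]
  refine prod_le_prod (fun _ _ => abs_nonneg _) fun i _ => ?_
  push_cast
  calc |r - i| ≤ |r| + |(i : ℝ)| := abs_sub _ _
    _ ≤ i + 1 := by rw [Nat.abs_cast]; linarith

end Ring

namespace Real

theorem hasSum_choose_mul_pow (r : ℝ) {u : ℝ} (hu : |u| < 1) :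
    HasSum (fun n => Ring.choose r n * u ^ n) ((1 + u) ^ r) := by
  have hmem : u ∈ Metric.eball (0 : ℝ) 1 := by
    rw [← ENNReal.ofReal_one, Metric.eball_ofReal]; simpa using hu
  have := (one_add_rpow_hasFPowerSeriesOnBall_zero (a := r)).hasSum hmem
  simpa [binomialSeries_apply, -FormalMultilinearSeries.apply_eq_prod_smul_coeff] using this

theorem hasSum_natCast_mul_choose_mul_pow (r : ℝ) {u : ℝ} (hu : |u| < 1) :
    HasSum (fun n : ℕ => n * Ring.choose r n * u ^ n) (r * u * (1 + u) ^ (r - 1)) := by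
  refine (hasSum_nat_add_iff' 1).mp ?_
  simp only [sum_range_one, Nat.cast_zero, zero_mul, sub_zero]
  refine ((hasSum_choose_mul_pow (r - 1) hu).mul_left (r * u)).congr_fun fun n => ?_
  push_cast
  linear_combination u ^ (n + 1) * Ring.succ_mul_choose_succ r n

theorem hasSum_natCast_sq_mul_choose_mul_pow (r : ℝ) {u : ℝ} (hu : |u| < 1) :
    HasSum (fun n : ℕ => (n : ℝ) ^ 2 * Ring.choose r n * u ^ n)
      (r * u * ((r - 1) * u * (1 + u) ^ (r - 2) + (1 + u) ^ (r - 1))) := by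
  refine (hasSum_nat_add_iff' 1).mp ?_
  simp only [sum_range_one, Nat.cast_zero, zero_pow two_ne_zero, zero_mul, sub_zero]
  have h := ((hasSum_natCast_mul_choose_mul_pow (r - 1) hu).add
    (hasSum_choose_mul_pow (r - 1) hu)).mul_left (r * u)
  rw [sub_sub, one_add_one_eq_two] at h
  refine h.congr_fun fun n => ?_
  push_cast
  linear_combination ((n : ℝ) + 1) * u ^ (n + 1) * Ring.succ_mul_choose_succ r n

theorem hasSum_neg_one_pow_mul_choose_succ_mul_pow (r : ℝ) {v : ℝ} (hv : |v| < 1) :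
    HasSum (fun j : ℕ => (-1) ^ j * Ring.choose r (j + 1) * v ^ (j + 1)) (1 - (1 - v) ^ r) := by
  have h := (hasSum_nat_add_iff' 1).mpr
    (hasSum_choose_mul_pow r (u := -v) (by rwa [abs_neg])).neg
  rw [sum_range_one, Ring.choose_zero_right, pow_zero, mul_one, ← sub_eq_add_neg,
    show -(1 - v) ^ r - -1 = 1 - (1 - v) ^ r by ring] at h
  refine h.congr_fun fun j => ?_
  rw [neg_pow v, pow_succ (-1 : ℝ)]
  ring

theorem hasSum_neg_one_pow_mul_choose_succ_mul_sq_mul_pow (r : ℝ) {v : ℝ} (hv : |v| < 1) :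
    HasSum (fun j : ℕ => (-1) ^ j * Ring.choose r (j + 1) * ((j : ℝ) + 1) ^ 2 * v ^ (j + 1))
      (r * v * (1 - v) ^ (r - 2) * (1 - r * v)) := by
  have h := (hasSum_nat_add_iff' 1).mpr
    (hasSum_natCast_sq_mul_choose_mul_pow r (u := -v) (by rwa [abs_neg])).neg
  have hv1 : 1 - v ≠ 0 := by linarith [(abs_lt.mp hv).2]
  rw [sum_range_one, Nat.cast_zero, zero_pow two_ne_zero, zero_mul, zero_mul, neg_zero, sub_zero,
    ← sub_eq_add_neg, show r - 1 = r - 2 + 1 by ring, rpow_add_one hv1,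
    show ∀ w : ℝ, -(r * -v * ((r - 2 + 1) * -v * w + w * (1 - v))) = r * v * w * (1 - r * v)
      from fun w => by ring] at h
  refine h.congr_fun fun j => ?_
  push_cast
  rw [neg_pow v, pow_succ (-1 : ℝ)]
  ring

end Real

theorem hasSum_integral_tsum_mul_rpow_mul_exp {a b : ℝ} (ha : 0 < a) (hb : 0 < b) {c : ℕ → ℝ}
    (hc : Summable fun j => |c j|) :
    HasSum
      (fun j : ℕ => c j * ((((j : ℝ) + 1) * b) ^ (-(a + 1) / a) * (1 / a) * Gamma ((a + 1) / a)))
      (∫ y in Ioi 0, ∑' j : ℕ, c j * (y ^ a * exp (-(((j : ℝ) + 1) * b) * y ^ a))) := by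
  have hb' : ∀ j : ℕ, 0 < ((j : ℝ) + 1) * b := fun j => by positivity
  have hint : ∀ j : ℕ,
      IntegrableOn (fun y => y ^ a * exp (-(((j : ℝ) + 1) * b) * y ^ a)) (Ioi 0) :=
    fun j => integrableOn_rpow_mul_exp_neg_mul_rpow (by linarith) ha (hb' j)
  have hval : ∀ j : ℕ, ∫ y in Ioi 0, y ^ a * exp (-(((j : ℝ) + 1) * b) * y ^ a) =
      (((j : ℝ) + 1) * b) ^ (-(a + 1) / a) * (1 / a) * Gamma ((a + 1) / a) :=
    fun j => integral_rpow_mul_exp_neg_mul_rpow ha (by linarith) (hb' j)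
  have hnorm : ∀ j : ℕ, ∫ y in Ioi 0, ‖c j * (y ^ a * exp (-(((j : ℝ) + 1) * b) * y ^ a))‖ =
      |c j| * ((((j : ℝ) + 1) * b) ^ (-(a + 1) / a) * (1 / a) * Gamma ((a + 1) / a)) := by
    intro j
    rw [← hval, ← integral_const_mul]
    refine setIntegral_congr_fun measurableSet_Ioi fun y (hy : 0 < y) => ?_
    rw [norm_mul, Real.norm_eq_abs, Real.norm_of_nonneg (by positivity)]
  refine (hasSum_integral_of_summable_integral_norm (fun j => (hint j).const_mul (c j))
    ?_).congr_fun fun j => by rw [integral_const_mul, hval]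
  simp_rw [hnorm]
  refine .of_nonneg_of_le (fun j => by positivity) (fun j => ?_)
    (hc.mul_right (b ^ (-(a + 1) / a) * (1 / a) * Gamma ((a + 1) / a)))
  gcongr |c j| * (?_ * _ * _)
  exact rpow_le_rpow_of_nonpos hb (le_mul_of_one_le_left hb.le (by simp))
    (by rw [neg_div]; exact neg_nonpos.mpr (by positivity))

theorem hasSum_mul_bgwPDF (a b₁ b₂ θ : ℝ) {x y : ℝ} (hy : 0 < y)
    (hpos : 0 < b₁ * x ^ a + b₂ * y ^ a) :
    HasSum (fun j : ℕ => a ^ 2 * b₁ * b₂ * x ^ (a - 1) *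
        ((-1) ^ j * Ring.choose θ (j + 1) * ((j : ℝ) + 1) ^ 2 * exp (-(b₁ * x ^ a)) ^ (j + 1)) *
          (y ^ a * exp (-(((j : ℝ) + 1) * b₂) * y ^ a)))
      (y * bgwPDF a b₁ b₂ θ x y) := by
  set u := exp (-(b₁ * x ^ a + b₂ * y ^ a))
  have hu : |u| < 1 := by
    rw [abs_of_pos (exp_pos _), exp_lt_one_iff]; linarith
  have h := (hasSum_neg_one_pow_mul_choose_succ_mul_sq_mul_pow θ hu).mul_left
    (a ^ 2 * b₁ * b₂ * x ^ (a - 1) * y ^ a)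
  have hval : y * bgwPDF a b₁ b₂ θ x y =
      a ^ 2 * b₁ * b₂ * x ^ (a - 1) * y ^ a * (θ * u * (1 - u) ^ (θ - 2) * (1 - θ * u)) := by
    rw [bgwPDF, rpow_sub_one hy.ne']
    field_simp
    rfl
  rw [hval]
  refine h.congr_fun fun j => ?_
  have hpow :
      u ^ (j + 1) = exp (-(b₁ * x ^ a)) ^ (j + 1) * exp (-(((j : ℝ) + 1) * b₂) * y ^ a) := by
    rw [← exp_nat_mul, ← exp_nat_mul, ← exp_add]
    push_cast
    ring_nf
  rw [hpow]
  ring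

theorem integral_mul_bgwPDF {a b₁ b₂ θ x : ℝ} (ha : 0 < a) (hb₁ : 0 < b₁) (hb₂ : 0 < b₂)
    (hθ : |θ| ≤ 1) (hx : 0 < x) :
    ∫ y in Ioi 0, y * bgwPDF a b₁ b₂ θ x y =
      a * b₁ * Gamma (1 + 1 / a) * x ^ (a - 1) / b₂ ^ (1 / a) *
        ∑' j : ℕ, (-1) ^ j * Ring.choose θ (j + 1) * ((j : ℝ) + 1) ^ (1 - 1 / a) *
          exp (-(((j : ℝ) + 1) * b₁ * x ^ a)) := by
  have hxa : 0 < x ^ a := rpow_pos_of_pos hx a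
  set K := a ^ 2 * b₁ * b₂ * x ^ (a - 1)
  set q := exp (-(b₁ * x ^ a))
  have hq : ‖q‖ < 1 := by
    rw [norm_of_nonneg (exp_pos _).le, exp_lt_one_iff]; nlinarith
  set c : ℕ → ℝ := fun j =>
    K * ((-1) ^ j * Ring.choose θ (j + 1) * ((j : ℝ) + 1) ^ 2 * q ^ (j + 1))
  have hc : Summable fun j => |c j| := by
    have hgeom : Summable fun j : ℕ => ((j + 1 : ℕ) : ℝ) ^ 2 * q ^ (j + 1) :=
      (summable_nat_add_iff (f := fun n : ℕ => (n : ℝ) ^ 2 * q ^ n) 1).mpr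
        (summable_pow_mul_geometric_of_norm_lt_one 2 hq)
    refine .of_nonneg_of_le (fun j => abs_nonneg _) (fun j => ?_) (hgeom.mul_left |K|)
    have hq0 : 0 ≤ q := (exp_pos _).le
    calc |c j| = |K| * (|Ring.choose θ (j + 1)| * (((j : ℝ) + 1) ^ 2 * q ^ (j + 1))) := by
          simp only [c, abs_mul, abs_pow, abs_neg, abs_one, one_pow, one_mul, mul_assoc,
            abs_of_nonneg hq0, abs_of_nonneg (by positivity : (0 : ℝ) ≤ (j : ℝ) + 1)]
      _ ≤ |K| * (1 * (((j : ℝ) + 1) ^ 2 * q ^ (j + 1))) := by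
          gcongr
          exact Ring.abs_choose_le_one hθ _
      _ = |K| * (((j + 1 : ℕ) : ℝ) ^ 2 * q ^ (j + 1)) := by push_cast; ring
  have hpoint : EqOn (fun y => y * bgwPDF a b₁ b₂ θ x y)
      (fun y => ∑' j : ℕ, c j * (y ^ a * exp (-(((j : ℝ) + 1) * b₂) * y ^ a))) (Ioi 0) :=
    fun y (hy : 0 < y) =>
      (hasSum_mul_bgwPDF a b₁ b₂ θ hy (by positivity)).tsum_eq.symm
  rw [setIntegral_congr_fun measurableSet_Ioi hpoint,
    ← (hasSum_integral_tsum_mul_rpow_mul_exp ha hb₂ hc).tsum_eq, ← tsum_mul_left]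
  refine tsum_congr fun j => ?_
  have hj : (0 : ℝ) < j + 1 := by positivity
  have hexp : (a + 1) / a = 1 + 1 / a := by field_simp
  have hneg : -(a + 1) / a = -1 - 1 / a := by field_simp; ring
  have hpow_j :
      ((j : ℝ) + 1) ^ 2 * ((j : ℝ) + 1) ^ (-1 - 1 / a) = ((j : ℝ) + 1) ^ (1 - 1 / a) := by
    rw [← rpow_two, ← rpow_add hj]; ring_nf
  have hpow_b : b₂ * b₂ ^ (-1 - 1 / a) = (b₂ ^ (1 / a))⁻¹ := by
    rw [← rpow_neg hb₂.le,
      ← rpow_one_add' hb₂.le (by ring_nf; exact neg_ne_zero.mpr (by positivity))]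
    ring_nf
  have hq_pow : q ^ (j + 1) = exp (-(((j : ℝ) + 1) * b₁ * x ^ a)) := by
    rw [← exp_nat_mul]; push_cast; ring_nf
  rw [mul_rpow hj.le hb₂.le, hexp, hneg, ← hq_pow, div_eq_mul_inv _ (b₂ ^ (1 / a)), ← hpow_b,
    ← hpow_j]
  simp only [c, K]
  field_simp

/-- The regression function of the BGW distribution:
`E[Y|X=x] = (ab₁Γ(1+1/a)x^{a-1}/(b₂^{1/a} f_X(x))) ∑_{j≥1} binom(θ,j)(-1)^{j+1} j^{1-1/a} e^{-jb₁x^a}`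
(sum re-indexed with `j := j+1`); when `a = 1` it reduces to
`E[Y|X=x] = (b₁/(b₂ f_X(x)))·[1-(1-e^{-b₁x})^θ]`. -/
theorem bgw_regression (a b₁ b₂ θ : ℝ) (ha : 0 < a) (hb₁ : 0 < b₁) (hb₂ : 0 < b₂)
    (hθ0 : 0 < θ) (hθ1 : θ ≤ 1) (x : ℝ) (hx : 0 < x) :
    (∫ y in Set.Ioi (0:ℝ), y * bgwPDF a b₁ b₂ θ x y) / bgwMarginalDensity a b₁ θ x
        = a * b₁ * Real.Gamma (1 + 1 / a) * x ^ (a - 1)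
            / (b₂ ^ ((1:ℝ) / a) * bgwMarginalDensity a b₁ θ x)
            * ∑' j : ℕ, ((-1:ℝ) ^ j * (∏ i ∈ Finset.range (j + 1), (θ - i))
                / (Nat.factorial (j + 1))) * ((j : ℝ) + 1) ^ (1 - 1 / a)
                * exp (-(((j : ℝ) + 1) * b₁ * x ^ a))
      ∧ (a = 1 →
          (∫ y in Set.Ioi (0:ℝ), y * bgwPDF a b₁ b₂ θ x y) / bgwMarginalDensity a b₁ θ x
            = b₁ / (b₂ * bgwMarginalDensity a b₁ θ x)
                * (1 - (1 - exp (-(b₁ * x))) ^ θ)) := by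
  simp_rw [mul_div_assoc _ (∏ i ∈ Finset.range _, (θ - i)), ← Ring.choose_eq_prod_range_div]
  have key := integral_mul_bgwPDF ha hb₁ hb₂ (abs_le.mpr ⟨by linarith, hθ1⟩) hx
  refine ⟨by rw [key]; ring, fun ha1 => ?_⟩
  subst ha1
  have hv : |exp (-(b₁ * x))| < 1 := by
    rw [abs_of_pos (exp_pos _), exp_lt_one_iff]; nlinarith
  have hS : ∑' j : ℕ, (-1) ^ j * Ring.choose θ (j + 1) * ((j : ℝ) + 1) ^ (1 - 1 / 1 : ℝ) *
      exp (-(((j : ℝ) + 1) * b₁ * x ^ (1 : ℝ))) = 1 - (1 - exp (-(b₁ * x))) ^ θ := by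
    rw [← (hasSum_neg_one_pow_mul_choose_succ_mul_pow θ hv).tsum_eq]
    refine tsum_congr fun j => ?_
    rw [div_one, sub_self, rpow_zero, rpow_one, mul_one, ← exp_nat_mul]
    push_cast
    ring_nf
  rw [key, hS, div_one, sub_self, rpow_zero, rpow_one, one_add_one_eq_two, Gamma_two]
  ring
end
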